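/- arXiv:2103.13493 — 2 statements merged into one kernel-verified Lean document; each statement's English description precedes it below -/
import Mathlib

section
/- Let z^0 ∈ ℝ^n and define the DANA-D iteration z^{k+1} = z^k − α A_q(z^k) ∇g(z^k) with step size α = (1−ε)/((n−1)(1+ε)(1−ε^{q+1})), where g(z) = Σ_{i=1}^n f_i(x^0_i + L_i z), H(x) = diag(f_i''(x_i)), and A_q(z) = Σ_{p=0}^q (I_n − L H(x^0 + Lz) L)^p. Assume there exists ε ∈ [0,1) such that for every x ∈ ℝ^n and every v ∈ ℝ^n with 1_n^⊤ v = 0, |v^⊤ (I_n − L H(x) L) v| ≤ ε ‖v‖². Then for every q ∈ ℕ and every iterate z = z^k with successor z^+ = z^{k+1}, it holds that g(z^+) − g(z) ≤ − ((1−ε)^4 (1+ε(−ε)^q)^2 / (2(n−1)^2 (1+ε)^3 (1−ε^{2(q+1)}))) ‖z − z*‖², where z* is the unique minimizer of g satisfying 1_n^⊤ z* = 1_n^⊤ z^0. -/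
/-!
Let `V = {v | ∑ i, v i = 0}`, which contains the range of `L`, hence every gradient and every
step. On `V` the hypothesis says that the symmetric matrix `M = 1 - L H L` has numerical range in
`[-ε, ε]`, so `‖M v‖ ≤ ε ‖v‖`, and the preconditioner `A = ∑_{p ≤ q} M ^ p` satisfies
`(1 - ε) ‖v‖² ≤ v ⬝ᵥ A v` and `‖A v‖² ≤ a (v ⬝ᵥ A v)` with `a = ∑_{p ≤ q} ε ^ p`. The Hessian
`L H L` of `g` lies between `1 - ε` and `1 + ε` along `V`. The descent lemma and
`α (1 + ε) a = 1 / (n - 1) ≤ 1` give `g z⁺ - g z ≤ -(α / 2) (r ⬝ᵥ A r) ≤ -(α (1 - ε) / 2) ‖r‖²`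
for `r = ∇g z`, and strong convexity along `z - z* ∈ V` gives `‖r‖ ≥ (1 - ε) ‖z - z*‖`. The
constant of the theorem is at most `α (1 - ε)³ / 2`.
-/

open Matrix

variable {ι : Type*} [Fintype ι]

theorem dotProduct_self_nonneg (v : ι → ℝ) : 0 ≤ v ⬝ᵥ v := by
  simpa using dotProduct_star_self_nonneg v

theorem sq_dotProduct_le (v w : ι → ℝ) : (v ⬝ᵥ w) ^ 2 ≤ (v ⬝ᵥ v) * (w ⬝ᵥ w) := by
  simpa [dotProduct, sq] using Finset.sum_mul_sq_le_sq_mul_sq Finset.univ v w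

namespace Matrix

variable {M : Matrix ι ι ℝ} {V : Submodule ℝ (ι → ℝ)}

section Powers

variable [DecidableEq ι]

theorem pow_mulVec_mem (hMV : ∀ v ∈ V, M *ᵥ v ∈ V) (p : ℕ) {v : ι → ℝ} (hv : v ∈ V) :
    (M ^ p) *ᵥ v ∈ V := by
  induction p with
  | zero => simpa using hv
  | succ p ih => rw [pow_succ', ← mulVec_mulVec]; exact hMV _ ih

theorem sum_pow_mulVec_mem (hMV : ∀ v ∈ V, M *ᵥ v ∈ V) (s : Finset ℕ) {v : ι → ℝ}
    (hv : v ∈ V) : (∑ p ∈ s, M ^ p) *ᵥ v ∈ V := by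
  rw [sum_mulVec]
  exact V.sum_mem fun p _ => pow_mulVec_mem hMV p hv

end Powers

namespace IsSymm

theorem dotProduct_mulVec_comm (hM : M.IsSymm) (v w : ι → ℝ) :
    v ⬝ᵥ (M *ᵥ w) = w ⬝ᵥ (M *ᵥ v) := by
  rw [dotProduct_mulVec, ← mulVec_transpose, hM.eq, dotProduct_comm]

theorem sq_dotProduct_mulVec_le (hM : M.IsSymm) (hnonneg : ∀ v ∈ V, 0 ≤ v ⬝ᵥ (M *ᵥ v))
    {v w : ι → ℝ} (hv : v ∈ V) (hw : w ∈ V) :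
    (v ⬝ᵥ (M *ᵥ w)) ^ 2 ≤ (v ⬝ᵥ (M *ᵥ v)) * (w ⬝ᵥ (M *ᵥ w)) := by
  have hquad : ∀ t : ℝ,
      0 ≤ (w ⬝ᵥ (M *ᵥ w)) * (t * t) + 2 * (v ⬝ᵥ (M *ᵥ w)) * t + v ⬝ᵥ (M *ᵥ v) := by
    intro t
    have h := hnonneg (v + t • w) (V.add_mem hv (V.smul_mem t hw))
    simp only [mulVec_add, mulVec_smul, dotProduct_add, add_dotProduct, dotProduct_smul,
      smul_dotProduct, smul_eq_mul, hM.dotProduct_mulVec_comm w v] at h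
    linarith
  have h := discrim_le_zero hquad
  rw [discrim] at h
  linarith

theorem mulVec_dotProduct_self_le_mul (hM : M.IsSymm) (hMV : ∀ v ∈ V, M *ᵥ v ∈ V)
    (hnonneg : ∀ v ∈ V, 0 ≤ v ⬝ᵥ (M *ᵥ v)) {a : ℝ} (ha : 0 ≤ a)
    (hle : ∀ v ∈ V, v ⬝ᵥ (M *ᵥ v) ≤ a * (v ⬝ᵥ v))
    {v : ι → ℝ} (hv : v ∈ V) :
    (M *ᵥ v) ⬝ᵥ (M *ᵥ v) ≤ a * (v ⬝ᵥ (M *ᵥ v)) := by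
  have hcs := hM.sq_dotProduct_mulVec_le hnonneg hv (hMV v hv)
  rw [hM.dotProduct_mulVec_comm] at hcs
  have hs := hnonneg v hv
  have hX := dotProduct_self_nonneg (M *ᵥ v)
  nlinarith [mul_le_mul_of_nonneg_left (hle _ (hMV v hv)) hs, mul_nonneg ha hs]

/-- Polarization: `4 t ‖M v‖² = q(t M v + v) - q(t M v - v) ≤ 2 ε (t² ‖M v‖² + ‖v‖²)` for the
quadratic form `q` of `M` and every real `t`, so the discriminant of this quadratic in `t` is
`≤ 0`. -/
theorem mulVec_dotProduct_self_le_sq_mul (hM : M.IsSymm) (hMV : ∀ v ∈ V, M *ᵥ v ∈ V) {ε : ℝ}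
    (hε : ∀ v ∈ V, |v ⬝ᵥ (M *ᵥ v)| ≤ ε * (v ⬝ᵥ v)) {v : ι → ℝ} (hv : v ∈ V) :
    (M *ᵥ v) ⬝ᵥ (M *ᵥ v) ≤ ε ^ 2 * (v ⬝ᵥ v) := by
  have hMw : v ⬝ᵥ (M *ᵥ (M *ᵥ v)) = (M *ᵥ v) ⬝ᵥ (M *ᵥ v) := hM.dotProduct_mulVec_comm _ _
  have hquad : ∀ t : ℝ, 0 ≤ (ε * ((M *ᵥ v) ⬝ᵥ (M *ᵥ v))) * (t * t)
      + (-2 * ((M *ᵥ v) ⬝ᵥ (M *ᵥ v))) * t + ε * (v ⬝ᵥ v) := by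
    intro t
    have hw : t • (M *ᵥ v) ∈ V := V.smul_mem t (hMV v hv)
    have hp := (abs_le.mp (hε _ (V.add_mem hw hv))).2
    have hm := (abs_le.mp (hε _ (V.sub_mem hw hv))).1
    simp only [mulVec_add, mulVec_sub, mulVec_smul, dotProduct_add, add_dotProduct,
      dotProduct_sub, sub_dotProduct, dotProduct_smul, smul_dotProduct, smul_eq_mul, hMw,
      dotProduct_comm v (M *ᵥ v)] at hp hm
    linear_combination (hp + hm) / 2
  have h := discrim_le_zero hquad
  rw [discrim] at h
  have hX := dotProduct_self_nonneg (M *ᵥ v)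
  have hY := dotProduct_self_nonneg v
  nlinarith [mul_nonneg (sq_nonneg ε) hY]

variable [DecidableEq ι]

theorem dotProduct_pow_add_mulVec (hM : M.IsSymm) (a b : ℕ) (v : ι → ℝ) :
    v ⬝ᵥ (M ^ (a + b) *ᵥ v) = (M ^ a *ᵥ v) ⬝ᵥ (M ^ b *ᵥ v) := by
  rw [pow_add, ← mulVec_mulVec, (hM.pow a).dotProduct_mulVec_comm, dotProduct_comm]

theorem pow_mulVec_dotProduct_self_le (hM : M.IsSymm) (hMV : ∀ v ∈ V, M *ᵥ v ∈ V) {ε : ℝ}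
    (hε : ∀ v ∈ V, |v ⬝ᵥ (M *ᵥ v)| ≤ ε * (v ⬝ᵥ v)) (p : ℕ) {v : ι → ℝ} (hv : v ∈ V) :
    (M ^ p *ᵥ v) ⬝ᵥ (M ^ p *ᵥ v) ≤ (ε ^ p) ^ 2 * (v ⬝ᵥ v) := by
  induction p generalizing v with
  | zero => simp
  | succ p ih =>
    rw [pow_succ, ← mulVec_mulVec]
    calc (M ^ p *ᵥ M *ᵥ v) ⬝ᵥ (M ^ p *ᵥ M *ᵥ v) ≤ (ε ^ p) ^ 2 * ((M *ᵥ v) ⬝ᵥ (M *ᵥ v)) :=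
          ih (hMV v hv)
      _ ≤ (ε ^ p) ^ 2 * (ε ^ 2 * (v ⬝ᵥ v)) := by
          gcongr; exact hM.mulVec_dotProduct_self_le_sq_mul hMV hε hv
      _ = (ε ^ (p + 1)) ^ 2 * (v ⬝ᵥ v) := by ring

theorem abs_dotProduct_pow_mulVec_le (hM : M.IsSymm) (hMV : ∀ v ∈ V, M *ᵥ v ∈ V) {ε : ℝ}
    (hε0 : 0 ≤ ε) (hε : ∀ v ∈ V, |v ⬝ᵥ (M *ᵥ v)| ≤ ε * (v ⬝ᵥ v)) (p : ℕ) {v : ι → ℝ}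
    (hv : v ∈ V) : |v ⬝ᵥ (M ^ p *ᵥ v)| ≤ ε ^ p * (v ⬝ᵥ v) := by
  have hY := dotProduct_self_nonneg v
  refine abs_le_of_sq_le_sq ?_ (by positivity)
  calc (v ⬝ᵥ (M ^ p *ᵥ v)) ^ 2 ≤ (v ⬝ᵥ v) * ((M ^ p *ᵥ v) ⬝ᵥ (M ^ p *ᵥ v)) :=
        sq_dotProduct_le _ _
    _ ≤ (v ⬝ᵥ v) * ((ε ^ p) ^ 2 * (v ⬝ᵥ v)) := by
        gcongr; exact hM.pow_mulVec_dotProduct_self_le hMV hε p hv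
    _ = (ε ^ p * (v ⬝ᵥ v)) ^ 2 := by ring

theorem sum_pow_isSymm (hM : M.IsSymm) (s : Finset ℕ) : (∑ p ∈ s, M ^ p).IsSymm := by
  rw [IsSymm, transpose_sum]
  exact Finset.sum_congr rfl fun p _ => (hM.pow p).eq

theorem dotProduct_sum_pow_mulVec_le (hM : M.IsSymm) (hMV : ∀ v ∈ V, M *ᵥ v ∈ V) {ε : ℝ}
    (hε0 : 0 ≤ ε) (hε : ∀ v ∈ V, |v ⬝ᵥ (M *ᵥ v)| ≤ ε * (v ⬝ᵥ v)) (s : Finset ℕ) {v : ι → ℝ}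
    (hv : v ∈ V) : v ⬝ᵥ ((∑ p ∈ s, M ^ p) *ᵥ v) ≤ (∑ p ∈ s, ε ^ p) * (v ⬝ᵥ v) := by
  rw [sum_mulVec, dotProduct_sum, Finset.sum_mul]
  exact Finset.sum_le_sum fun p _ =>
    (le_abs_self _).trans (hM.abs_dotProduct_pow_mulVec_le hMV hε0 hε p hv)

/-- The terms pair up: `v ⬝ᵥ M ^ (2j) v + v ⬝ᵥ M ^ (2j+1) v = w ⬝ᵥ (1 + M) w` with `w = M ^ j v`,
which is `≥ (1 - ε) ‖w‖² ≥ 0`. -/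
theorem one_sub_mul_le_dotProduct_sum_pow_mulVec (hM : M.IsSymm) (hMV : ∀ v ∈ V, M *ᵥ v ∈ V)
    {ε : ℝ} (hε0 : 0 ≤ ε) (hε1 : ε ≤ 1) (hε : ∀ v ∈ V, |v ⬝ᵥ (M *ᵥ v)| ≤ ε * (v ⬝ᵥ v))
    (q : ℕ) {v : ι → ℝ} (hv : v ∈ V) :
    (1 - ε) * (v ⬝ᵥ v) ≤ v ⬝ᵥ ((∑ p ∈ Finset.range (q + 1), M ^ p) *ᵥ v) := by
  rw [sum_mulVec, dotProduct_sum]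
  set S : ℕ → ℝ := fun m => ∑ p ∈ Finset.range m, v ⬝ᵥ (M ^ p *ᵥ v)
  have heven (j : ℕ) : 0 ≤ v ⬝ᵥ (M ^ (2 * j) *ᵥ v) := by
    rw [two_mul, hM.dotProduct_pow_add_mulVec]
    exact dotProduct_self_nonneg _
  have hpair (j : ℕ) :
      (1 - ε) * ((M ^ j *ᵥ v) ⬝ᵥ (M ^ j *ᵥ v)) ≤
        v ⬝ᵥ (M ^ (2 * j) *ᵥ v) + v ⬝ᵥ (M ^ (2 * j + 1) *ᵥ v) := by
    rw [two_mul, hM.dotProduct_pow_add_mulVec, add_assoc, hM.dotProduct_pow_add_mulVec,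
      pow_succ', ← mulVec_mulVec]
    have := (abs_le.mp (hε _ (pow_mulVec_mem hMV j hv))).1
    rw [dotProduct_comm] at this
    linarith
  have hS (m : ℕ) :
      (1 - ε) * (v ⬝ᵥ v) ≤ S (2 * m + 1) ∧ (1 - ε) * (v ⬝ᵥ v) ≤ S (2 * m + 2) := by
    induction m with
    | zero =>
      have := hpair 0
      norm_num [S, Finset.sum_range_succ] at this ⊢
      constructor <;> nlinarith [dotProduct_self_nonneg v]
    | succ m ih =>
      have heven' := heven (m + 1)
      have hpair' := hpair (m + 1)
      have hw := mul_nonneg (sub_nonneg.2 hε1) (dotProduct_self_nonneg (M ^ (m + 1) *ᵥ v))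
      rw [show 2 * (m + 1) = 2 * m + 2 by ring] at heven' hpair' ⊢
      simp only [S, Finset.sum_range_succ _ (2 * m + 2 + 1), Finset.sum_range_succ _ (2 * m + 2)]
      constructor <;> linarith [ih.2]
  obtain ⟨m, rfl | rfl⟩ := Nat.even_or_odd' q
  · exact (hS m).1
  · exact (hS m).2

theorem sum_pow_mulVec_dotProduct_self_le (hM : M.IsSymm) (hMV : ∀ v ∈ V, M *ᵥ v ∈ V) {ε : ℝ}
    (hε0 : 0 ≤ ε) (hε1 : ε ≤ 1) (hε : ∀ v ∈ V, |v ⬝ᵥ (M *ᵥ v)| ≤ ε * (v ⬝ᵥ v)) (q : ℕ)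
    {v : ι → ℝ} (hv : v ∈ V) :
    ((∑ p ∈ Finset.range (q + 1), M ^ p) *ᵥ v) ⬝ᵥ ((∑ p ∈ Finset.range (q + 1), M ^ p) *ᵥ v) ≤
      (∑ p ∈ Finset.range (q + 1), ε ^ p) * (v ⬝ᵥ ((∑ p ∈ Finset.range (q + 1), M ^ p) *ᵥ v)) :=
  (hM.sum_pow_isSymm _).mulVec_dotProduct_self_le_mul (fun _ hw => sum_pow_mulVec_mem hMV _ hw)
    (fun w hw => (mul_nonneg (sub_nonneg.2 hε1) (dotProduct_self_nonneg w)).trans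
      (hM.one_sub_mul_le_dotProduct_sum_pow_mulVec hMV hε0 hε1 hε q hw))
    (Finset.sum_nonneg fun p _ => pow_nonneg hε0 p)
    (fun _ hw => hM.dotProduct_sum_pow_mulVec_le hMV hε0 hε _ hw) hv

end IsSymm

end Matrix

theorem le_add_add_half_of_deriv2_le {φ φ' φ'' : ℝ → ℝ} {K : ℝ}
    (hφ : ∀ t, HasDerivAt φ (φ' t) t) (hφ' : ∀ t, HasDerivAt φ' (φ'' t) t) (hK : ∀ t, φ'' t ≤ K) :
    φ 1 ≤ φ 0 + φ' 0 + K / 2 := by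
  have hψ (t : ℝ) :
      HasDerivAt (fun t => φ t - t * φ' 0 - K / 2 * t ^ 2) (φ' t - φ' 0 - K * t) t :=
    (((hφ t).fun_sub ((hasDerivAt_id t).mul_const (φ' 0))).fun_sub
      ((hasDerivAt_pow 2 t).const_mul (K / 2))).congr_deriv (by norm_num; ring)
  have hψ' (t : ℝ) : HasDerivAt (fun t => φ' t - φ' 0 - K * t) (φ'' t - K) t := by
    simpa using ((hφ' t).sub_const (φ' 0)).fun_sub ((hasDerivAt_id t).const_mul K)
  have hanti : Antitone fun t => φ' t - φ' 0 - K * t :=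
    antitone_of_deriv_nonpos (fun t => (hψ' t).differentiableAt) fun t => by
      rw [(hψ' t).deriv]; linarith [hK t]
  obtain ⟨c, hc, hslope⟩ := exists_hasDerivAt_eq_slope _ _ zero_lt_one
    (fun t _ => (hψ t).continuousAt.continuousWithinAt) fun t _ => hψ t
  have := hanti hc.1.le
  norm_num at hslope this
  linarith

theorem hasDerivAt_sum_comp_add_mul {F F' : ι → ℝ → ℝ} (hF : ∀ i s, HasDerivAt (F i) (F' i s) s)
    (a b : ι → ℝ) (t : ℝ) :
    HasDerivAt (fun t => ∑ i, F i (a i + t * b i)) (∑ i, b i * F' i (a i + t * b i)) t :=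
  HasDerivAt.fun_sum fun i _ => by
    simpa [Function.comp_def, mul_comm] using
      (hF i _).comp t (((hasDerivAt_id t).mul_const (b i)).const_add (a i))

section Objective

variable (L : Matrix ι ι ℝ) (f : ι → ℝ → ℝ) (x0 : ι → ℝ)

noncomputable def objective (z : ι → ℝ) : ℝ := ∑ i, f i (x0 i + (L *ᵥ z) i)

noncomputable def objectiveGrad (z : ι → ℝ) : ι → ℝ :=
  L *ᵥ fun i => deriv (f i) (x0 i + (L *ᵥ z) i)

noncomputable def objectiveHessian [DecidableEq ι] (z : ι → ℝ) : Matrix ι ι ℝ :=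
  L * diagonal (fun i => deriv (deriv (f i)) (x0 i + (L *ᵥ z) i)) * L

variable {L f x0}

theorem add_mulVec_add_smul (y d : ι → ℝ) (t : ℝ) (i : ι) :
    x0 i + (L *ᵥ (y + t • d)) i = (x0 i + (L *ᵥ y) i) + t * (L *ᵥ d) i := by
  simp only [mulVec_add, mulVec_smul, Pi.add_apply, Pi.smul_apply, smul_eq_mul]; ring

theorem hasDerivAt_objective_line (hL : L.IsSymm) (hf : ∀ i, Differentiable ℝ (f i))
    (y d : ι → ℝ) (t : ℝ) :
    HasDerivAt (fun t => objective L f x0 (y + t • d))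
      (d ⬝ᵥ objectiveGrad L f x0 (y + t • d)) t := by
  simp only [objective, objectiveGrad, add_mulVec_add_smul, hL.dotProduct_mulVec_comm d,
    dotProduct_comm _ (L *ᵥ d)]
  exact hasDerivAt_sum_comp_add_mul (fun i s => (hf i s).hasDerivAt) _ _ t

theorem objectiveGrad_eq_zero_of_forall_le (hL : L.IsSymm) (hf : ∀ i, Differentiable ℝ (f i))
    {z : ι → ℝ} (hz : ∀ w, objective L f x0 z ≤ objective L f x0 w) :
    objectiveGrad L f x0 z = 0 := by
  classical
  funext j
  have hmin : IsLocalMin (fun t : ℝ => objective L f x0 (z + t • Pi.single j 1)) 0 :=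
    Filter.Eventually.of_forall fun t => by simpa using hz _
  simpa using hmin.hasDerivAt_eq_zero (hasDerivAt_objective_line hL hf z (Pi.single j 1) 0)

theorem objectiveHessian_isSymm [DecidableEq ι] (hL : L.IsSymm) (z : ι → ℝ) :
    (objectiveHessian L f x0 z).IsSymm := by
  simp only [IsSymm, objectiveHessian, transpose_mul, hL.eq, diagonal_transpose, Matrix.mul_assoc]

theorem objectiveHessian_mulVec_mem [DecidableEq ι] {V : Submodule ℝ (ι → ℝ)}
    (hLV : ∀ v, L *ᵥ v ∈ V) (z v : ι → ℝ) : objectiveHessian L f x0 z *ᵥ v ∈ V := by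
  rw [objectiveHessian, ← mulVec_mulVec, ← mulVec_mulVec]
  exact hLV _

theorem dotProduct_objectiveHessian_mulVec [DecidableEq ι] (hL : L.IsSymm) (z d : ι → ℝ) :
    d ⬝ᵥ (objectiveHessian L f x0 z *ᵥ d) =
      ∑ i, (L *ᵥ d) i * ((L *ᵥ d) i * deriv (deriv (f i)) (x0 i + (L *ᵥ z) i)) := by
  rw [objectiveHessian, ← mulVec_mulVec, ← mulVec_mulVec, hL.dotProduct_mulVec_comm,
    dotProduct_comm]
  simp only [dotProduct, mulVec_diagonal, mul_comm]

theorem hasDerivAt_dotProduct_objectiveGrad_line [DecidableEq ι] (hL : L.IsSymm)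
    (hf : ∀ i, ContDiff ℝ 2 (f i)) (y d : ι → ℝ) (t : ℝ) :
    HasDerivAt (fun t => d ⬝ᵥ objectiveGrad L f x0 (y + t • d))
      (d ⬝ᵥ (objectiveHessian L f x0 (y + t • d) *ᵥ d)) t := by
  simp only [dotProduct_objectiveHessian_mulVec hL, objectiveGrad, add_mulVec_add_smul,
    hL.dotProduct_mulVec_comm d, dotProduct_comm _ (L *ᵥ d)]
  exact hasDerivAt_sum_comp_add_mul
    (fun i s => ((hf i).differentiable_deriv_two s).hasDerivAt.const_mul ((L *ᵥ d) i)) _ _ t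

theorem objective_add_le [DecidableEq ι] (hL : L.IsSymm) (hf : ∀ i, ContDiff ℝ 2 (f i))
    {y d : ι → ℝ} {K : ℝ} (hK : ∀ t : ℝ, d ⬝ᵥ (objectiveHessian L f x0 (y + t • d) *ᵥ d) ≤ K) :
    objective L f x0 (y + d) ≤ objective L f x0 y + d ⬝ᵥ objectiveGrad L f x0 y + K / 2 := by
  simpa using le_add_add_half_of_deriv2_le
    (hasDerivAt_objective_line hL (fun i => (hf i).differentiable two_ne_zero) y d)
    (hasDerivAt_dotProduct_objectiveGrad_line hL hf y d) hK

theorem dotProduct_objectiveGrad_add_le [DecidableEq ι] (hL : L.IsSymm)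
    (hf : ∀ i, ContDiff ℝ 2 (f i)) {y d : ι → ℝ} {m : ℝ}
    (hm : ∀ t : ℝ, m ≤ d ⬝ᵥ (objectiveHessian L f x0 (y + t • d) *ᵥ d)) :
    d ⬝ᵥ objectiveGrad L f x0 y + m ≤ d ⬝ᵥ objectiveGrad L f x0 (y + d) := by
  have hη := hasDerivAt_dotProduct_objectiveGrad_line (x0 := x0) hL hf y d
  have := mul_sub_le_image_sub_of_le_deriv (fun t => (hη t).differentiableAt)
    (fun t => (hη t).deriv ▸ hm t) zero_le_one
  simp only [sub_zero, mul_one, one_smul, zero_smul, add_zero] at this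
  linarith

theorem sq_mul_dotProduct_self_le_objectiveGrad [DecidableEq ι] (hL : L.IsSymm)
    (hf : ∀ i, ContDiff ℝ 2 (f i)) {μ : ℝ} (hμ : 0 ≤ μ) {z zs : ι → ℝ}
    (hmin : ∀ w, objective L f x0 zs ≤ objective L f x0 w)
    (hconv : ∀ y,
      μ * ((z - zs) ⬝ᵥ (z - zs)) ≤ (z - zs) ⬝ᵥ (objectiveHessian L f x0 y *ᵥ (z - zs))) :
    μ ^ 2 * ((z - zs) ⬝ᵥ (z - zs)) ≤ objectiveGrad L f x0 z ⬝ᵥ objectiveGrad L f x0 z := by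
  have hmono := dotProduct_objectiveGrad_add_le hL hf fun t => hconv (zs + t • (z - zs))
  rw [objectiveGrad_eq_zero_of_forall_le hL (fun i => (hf i).differentiable two_ne_zero) hmin,
    dotProduct_zero, zero_add, add_sub_cancel] at hmono
  have hcs := sq_dotProduct_le (z - zs) (objectiveGrad L f x0 z)
  have hW := dotProduct_self_nonneg (z - zs)
  have hR := dotProduct_self_nonneg (objectiveGrad L f x0 z)
  have := pow_le_pow_left₀ (mul_nonneg hμ hW) hmono 2
  nlinarith

theorem objective_sub_smul_mulVec_objectiveGrad_sub_le [DecidableEq ι] (hL : L.IsSymm)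
    (hf : ∀ i, ContDiff ℝ 2 (f i))
    {V : Submodule ℝ (ι → ℝ)} {μ ℓ c a α : ℝ} (hμ : 0 ≤ μ) (hℓ : 0 ≤ ℓ) (hc : 0 ≤ c)
    (hα : 0 ≤ α) (hαa : α * ℓ * a ≤ 1)
    (hcurv : ∀ y, ∀ v ∈ V, μ * (v ⬝ᵥ v) ≤ v ⬝ᵥ (objectiveHessian L f x0 y *ᵥ v) ∧
      v ⬝ᵥ (objectiveHessian L f x0 y *ᵥ v) ≤ ℓ * (v ⬝ᵥ v))
    {A : Matrix ι ι ℝ} (hAV : ∀ v ∈ V, A *ᵥ v ∈ V)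
    (hAc : ∀ v ∈ V, c * (v ⬝ᵥ v) ≤ v ⬝ᵥ (A *ᵥ v))
    (hAa : ∀ v ∈ V, (A *ᵥ v) ⬝ᵥ (A *ᵥ v) ≤ a * (v ⬝ᵥ (A *ᵥ v)))
    {z zs : ι → ℝ} (hgrad : objectiveGrad L f x0 z ∈ V) (hzs : z - zs ∈ V)
    (hmin : ∀ w, objective L f x0 zs ≤ objective L f x0 w) :
    objective L f x0 (z - α • (A *ᵥ objectiveGrad L f x0 z)) - objective L f x0 z ≤
      -(α * c * μ ^ 2 / 2) * ((z - zs) ⬝ᵥ (z - zs)) := by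
  have hdesc := objective_add_le (y := z) hL hf fun t =>
    (hcurv (z + t • _) _ (V.smul_mem (-α) (hAV _ hgrad))).2
  have hs := hAc _ hgrad
  have hu := mul_le_mul_of_nonneg_left (hAa _ hgrad) (by positivity : 0 ≤ ℓ * α ^ 2 / 2)
  have hαs := mul_le_mul_of_nonneg_right hαa
    (mul_nonneg hα ((mul_nonneg hc (dotProduct_self_nonneg _)).trans hs))
  have hdist := sq_mul_dotProduct_self_le_objectiveGrad hL hf hμ hmin fun y => (hcurv y _ hzs).1
  set r := objectiveGrad L f x0 z
  set u := A *ᵥ r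
  simp only [smul_dotProduct, dotProduct_smul, smul_eq_mul, dotProduct_comm u r] at hdesc
  rw [sub_eq_add_neg z, ← neg_smul]
  -- descent lemma, then `ℓ α² ‖u‖² ≤ (α ℓ a) (α (r ⬝ᵥ u)) ≤ α (r ⬝ᵥ u)`
  calc objective L f x0 (z + -α • u) - objective L f x0 z
      ≤ -(α / 2) * (r ⬝ᵥ u) := by linarith
    _ ≤ -(α / 2) * (c * (r ⬝ᵥ r)) := mul_le_mul_of_nonpos_left hs (by linarith)
    _ ≤ -(α * c * μ ^ 2 / 2) * ((z - zs) ⬝ᵥ (z - zs)) := by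
        nlinarith [mul_le_mul_of_nonneg_left hdist (by positivity : 0 ≤ α * c / 2)]

end Objective

theorem abs_dotProduct_one_sub_mulVec_le_iff [DecidableEq ι] {B : Matrix ι ι ℝ} {ε : ℝ}
    {v : ι → ℝ} : |v ⬝ᵥ ((1 - B) *ᵥ v)| ≤ ε * (v ⬝ᵥ v) ↔
      (1 - ε) * (v ⬝ᵥ v) ≤ v ⬝ᵥ (B *ᵥ v) ∧ v ⬝ᵥ (B *ᵥ v) ≤ (1 + ε) * (v ⬝ᵥ v) := by
  rw [sub_mulVec, one_mulVec, dotProduct_sub, abs_le]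
  constructor <;> rintro ⟨h₁, h₂⟩ <;> constructor <;> linarith

section Dana

variable [DecidableEq ι] (L : Matrix ι ι ℝ) (f : ι → ℝ → ℝ) (x0 : ι → ℝ)

noncomputable def danaPreconditioner (q : ℕ) (z : ι → ℝ) : Matrix ι ι ℝ :=
  ∑ p ∈ Finset.range (q + 1), (1 - objectiveHessian L f x0 z) ^ p

variable {L f x0} {V : Submodule ℝ (ι → ℝ)}

theorem one_sub_objectiveHessian_mulVec_mem (hLV : ∀ v, L *ᵥ v ∈ V) (z : ι → ℝ) {v : ι → ℝ}
    (hv : v ∈ V) : (1 - objectiveHessian L f x0 z) *ᵥ v ∈ V := by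
  rw [sub_mulVec, one_mulVec]
  exact V.sub_mem hv (objectiveHessian_mulVec_mem hLV z v)

theorem danaPreconditioner_mulVec_mem (hLV : ∀ v, L *ᵥ v ∈ V) (q : ℕ) (z : ι → ℝ) {v : ι → ℝ}
    (hv : v ∈ V) : danaPreconditioner L f x0 q z *ᵥ v ∈ V :=
  sum_pow_mulVec_mem (fun _ hw => one_sub_objectiveHessian_mulVec_mem hLV z hw) _ hv

theorem objective_sub_smul_danaPreconditioner_sub_le (hL : L.IsSymm) (hLV : ∀ v, L *ᵥ v ∈ V)
    (hf : ∀ i, ContDiff ℝ 2 (f i)) {ε : ℝ} (hε0 : 0 ≤ ε) (hε1 : ε < 1)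
    (hspec : ∀ y, ∀ v ∈ V,
      |v ⬝ᵥ ((1 - objectiveHessian L f x0 y) *ᵥ v)| ≤ ε * (v ⬝ᵥ v))
    {q : ℕ} {α : ℝ} (hα0 : 0 ≤ α) (hα : α * (1 + ε) * ∑ p ∈ Finset.range (q + 1), ε ^ p ≤ 1)
    {z zs : ι → ℝ} (hzs : z - zs ∈ V) (hmin : ∀ w, objective L f x0 zs ≤ objective L f x0 w) :
    objective L f x0 (z - α • (danaPreconditioner L f x0 q z *ᵥ objectiveGrad L f x0 z)) -
        objective L f x0 z ≤
      -(α * (1 - ε) * (1 - ε) ^ 2 / 2) * ((z - zs) ⬝ᵥ (z - zs)) := by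
  have hM := isSymm_one.sub (objectiveHessian_isSymm (f := f) (x0 := x0) hL z)
  have hMV (v) (hv : v ∈ V) := one_sub_objectiveHessian_mulVec_mem (f := f) (x0 := x0) hLV z hv
  exact objective_sub_smul_mulVec_objectiveGrad_sub_le hL hf (sub_nonneg.2 hε1.le)
    (by linarith) (sub_nonneg.2 hε1.le) hα0 hα
    (fun y v hv => abs_dotProduct_one_sub_mulVec_le_iff.1 (hspec y v hv))
    (fun _ hv => danaPreconditioner_mulVec_mem hLV q z hv)
    (fun _ hv => hM.one_sub_mul_le_dotProduct_sum_pow_mulVec hMV hε0 hε1.le (hspec z) q hv)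
    (fun _ hv => hM.sum_pow_mulVec_dotProduct_self_le hMV hε0 hε1.le (hspec z) q hv)
    (hLV _) hzs hmin

end Dana

def sumZero (ι : Type*) [Fintype ι] : Submodule ℝ (ι → ℝ) where
  carrier := {v | ∑ i, v i = 0}
  add_mem' {v w} hv hw := by simp_all [Finset.sum_add_distrib]
  zero_mem' := by simp
  smul_mem' c v hv := by simp_all [← Finset.mul_sum]

theorem mem_sumZero {v : ι → ℝ} : v ∈ sumZero ι ↔ ∑ i, v i = 0 := Iff.rfl

theorem mulVec_mem_sumZero {L : Matrix ι ι ℝ} (hL : L.IsSymm) (hL1 : L *ᵥ 1 = 0) (v : ι → ℝ) :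
    L *ᵥ v ∈ sumZero ι := by
  rw [mem_sumZero, ← one_dotProduct, hL.dotProduct_mulVec_comm, hL1, dotProduct_zero]

theorem Submodule.sub_mem_of_forall_succ_sub_mem {R E : Type*} [Ring R] [AddCommGroup E]
    [Module R E] {V : Submodule R E} {z : ℕ → E} {w : E} (h : ∀ k, z (k + 1) - z k ∈ V)
    (h0 : z 0 - w ∈ V) (k : ℕ) : z k - w ∈ V := by
  induction k with
  | zero => exact h0
  | succ k ih => simpa using V.add_mem (h k) ih

noncomputable def danaStepSize (N ε : ℝ) (q : ℕ) : ℝ :=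
  (1 - ε) / (N * (1 + ε) * (1 - ε ^ (q + 1)))

theorem danaStepSize_nonneg {ε N : ℝ} (hε0 : 0 ≤ ε) (hε1 : ε ≤ 1) (hN : 0 ≤ N) (q : ℕ) :
    0 ≤ danaStepSize N ε q := by
  have := pow_le_one₀ hε0 hε1 (n := q + 1)
  unfold danaStepSize
  apply div_nonneg <;> [linarith; apply mul_nonneg (by positivity) (by linarith)]

theorem danaStepSize_mul_geom_sum_le_one {ε N : ℝ} (hε0 : 0 ≤ ε) (hε1 : ε < 1) (hN : 1 ≤ N)
    (q : ℕ) : danaStepSize N ε q * (1 + ε) * ∑ p ∈ Finset.range (q + 1), ε ^ p ≤ 1 := by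
  have hεq : ε ^ (q + 1) < 1 := pow_lt_one₀ hε0 hε1 (Nat.succ_ne_zero q)
  have h : danaStepSize N ε q * (1 + ε) * ∑ p ∈ Finset.range (q + 1), ε ^ p = 1 / N := by
    have : ε - 1 ≠ 0 := by linarith
    have : 1 - ε ^ (q + 1) ≠ 0 := by linarith
    have : N ≠ 0 := by linarith
    have : 1 + ε ≠ 0 := by linarith
    rw [danaStepSize, geom_sum_eq hε1.ne]
    field_simp
    ring
  rw [h]
  exact (div_le_one (by linarith)).2 hN

theorem danaRate_le {ε N : ℝ} (hε0 : 0 ≤ ε) (hε1 : ε < 1) (hN : 1 ≤ N) (q : ℕ) :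
    (1 - ε) ^ 4 * (1 + ε * (-ε) ^ q) ^ 2 / (2 * N ^ 2 * (1 + ε) ^ 3 * (1 - ε ^ (2 * (q + 1)))) ≤
      danaStepSize N ε q * (1 - ε) * (1 - ε) ^ 2 / 2 := by
  rw [danaStepSize]
  set x := ε ^ (q + 1) with hx
  have hx0 : 0 ≤ x := by positivity
  have hxε : x ≤ ε := pow_le_of_le_one hε0 hε1.le (Nat.succ_ne_zero q)
  have habs : |ε * (-ε) ^ q| = x := by
    rw [abs_mul, abs_pow, abs_neg, abs_of_nonneg hε0, hx, pow_succ']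
  have hsq : (1 + ε * (-ε) ^ q) ^ 2 ≤ (1 + x) ^ 2 := by
    have := abs_le.mp habs.le
    exact pow_le_pow_left₀ (by linarith) (by linarith) 2
  rw [show 2 * (q + 1) = (q + 1) * 2 by ring, pow_mul, ← hx]
  have h1x : 0 < 1 - x := by linarith
  have h1x2 : 0 < 1 - x ^ 2 := by nlinarith
  have h1ε : 0 < 1 - ε := by linarith
  have hN0 : 0 < N := by linarith
  calc (1 - ε) ^ 4 * (1 + ε * (-ε) ^ q) ^ 2 / (2 * N ^ 2 * (1 + ε) ^ 3 * (1 - x ^ 2))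
      ≤ (1 - ε) ^ 4 * (1 + x) ^ 2 / (2 * N ^ 2 * (1 + ε) ^ 3 * (1 - x ^ 2)) := by
        gcongr
    _ = (1 - ε) ^ 4 / (2 * N * (1 + ε) * (1 - x)) * ((1 + x) / (N * (1 + ε) ^ 2)) := by
        field_simp
        ring
    _ ≤ (1 - ε) ^ 4 / (2 * N * (1 + ε) * (1 - x)) * 1 := by
        gcongr
        rw [div_le_one (by positivity)]
        nlinarith
    _ = (1 - ε) / (N * (1 + ε) * (1 - x)) * (1 - ε) * (1 - ε) ^ 2 / 2 := by
        field_simp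

theorem dana_d_linear_convergence_general
    (n : ℕ) (hn : 2 ≤ n)
    (L : Matrix (Fin n) (Fin n) ℝ)
    (hLsymm : L.IsSymm)
    (hL1 : L *ᵥ (fun _ => (1 : ℝ)) = 0)
    (f : Fin n → ℝ → ℝ)
    (hf : ∀ i, ContDiff ℝ 2 (f i))
    (x0 : Fin n → ℝ)
    (g : (Fin n → ℝ) → ℝ)
    (hg : g = fun z => ∑ i, f i (x0 i + (L *ᵥ z) i))
    (H : (Fin n → ℝ) → Matrix (Fin n) (Fin n) ℝ)
    (hH : H = fun x => Matrix.diagonal fun i => deriv (deriv (f i)) (x i))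
    (gradg : (Fin n → ℝ) → (Fin n → ℝ))
    (hgradg : gradg = fun z => L *ᵥ fun i => deriv (f i) (x0 i + (L *ᵥ z) i))
    (q : ℕ)
    (A : (Fin n → ℝ) → Matrix (Fin n) (Fin n) ℝ)
    (hA : A = fun z => ∑ p ∈ Finset.range (q + 1),
      (1 - L * H (fun i => x0 i + (L *ᵥ z) i) * L) ^ p)
    (ε : ℝ) (hε0 : 0 ≤ ε) (hε1 : ε < 1)
    (hspec : ∀ x v : Fin n → ℝ, (∑ i, v i) = 0 →
      |v ⬝ᵥ ((1 - L * H x * L) *ᵥ v)| ≤ ε * (v ⬝ᵥ v))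
    (α : ℝ)
    (hα : α = (1 - ε) / ((n - 1 : ℝ) * (1 + ε) * (1 - ε ^ (q + 1))))
    (z0 : Fin n → ℝ) (z : ℕ → Fin n → ℝ)
    (hz0 : z 0 = z0)
    (hiter : ∀ k, z (k + 1) = z k - α • (A (z k) *ᵥ gradg (z k)))
    (zstar : Fin n → ℝ)
    (hzstar_min : ∀ w, g zstar ≤ g w)
    (hzstar_sum : ∑ i, zstar i = ∑ i, z0 i) :
    ∀ k, g (z (k + 1)) - g (z k) ≤
      -(((1 - ε) ^ 4 * (1 + ε * (-ε) ^ q) ^ 2) /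
          (2 * ((n : ℝ) - 1) ^ 2 * (1 + ε) ^ 3 * (1 - ε ^ (2 * (q + 1))))) *
        (∑ i, (z k i - zstar i) ^ 2) := by
  intro k
  subst hg hH hgradg hA hα hz0
  have hLV := mulVec_mem_sumZero hLsymm hL1
  have hN : (1 : ℝ) ≤ n - 1 := by
    have : (2 : ℝ) ≤ n := by exact_mod_cast hn
    linarith
  have hzk : z k - zstar ∈ sumZero (Fin n) := by
    refine Submodule.sub_mem_of_forall_succ_sub_mem (fun m => ?_) ?_ k
    · rw [hiter m, sub_sub_cancel_left]
      exact neg_mem (Submodule.smul_mem _ _ (danaPreconditioner_mulVec_mem hLV q _ (hLV _)))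
    · simp [mem_sumZero, Finset.sum_sub_distrib, hzstar_sum]
  rw [hiter k, show ∑ i, (z k i - zstar i) ^ 2 = (z k - zstar) ⬝ᵥ (z k - zstar) by
    simp [dotProduct, sq]]
  refine (objective_sub_smul_danaPreconditioner_sub_le hLsymm hLV hf hε0 hε1
    (fun y v hv => hspec _ v hv) (danaStepSize_nonneg hε0 hε1.le (by linarith) q)
    (danaStepSize_mul_geom_sum_le_one hε0 hε1 hN q) hzk hzstar_min).trans ?_
  exact mul_le_mul_of_nonneg_right (neg_le_neg (danaRate_le hε0 hε1 hN q))
    (dotProduct_self_nonneg _)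

/-- **DANA-D linear convergence** (Theorem: Linear Convergence of DANA-D).
With the specific step size `α = (1-ε)/((n-1)(1+ε)(1-ε^{q+1}))`, each DANA-D step
decreases `g` by at least a fixed multiple of the squared distance to the unique
minimizer `z*` of `g` with `1ᵀ z* = 1ᵀ z⁰`. -/
theorem dana_d_linear_convergence
    (n : ℕ) (hn : 2 ≤ n)
    (L : Matrix (Fin n) (Fin n) ℝ)
    (hLsymm : L.IsSymm) (hLpsd : L.PosSemidef)
    (hL1 : L *ᵥ (fun _ => (1 : ℝ)) = 0)
    (hLker : ∀ v : Fin n → ℝ, L *ᵥ v = 0 → ∃ c : ℝ, v = fun _ => c)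
    (f : Fin n → ℝ → ℝ) (δ Δ : Fin n → ℝ)
    (hf : ∀ i, ContDiff ℝ 2 (f i))
    (hδ : ∀ i, 0 < δ i)
    (hbounds : ∀ i s, δ i ≤ deriv (deriv (f i)) s ∧ deriv (deriv (f i)) s ≤ Δ i)
    (x0 : Fin n → ℝ)
    (g : (Fin n → ℝ) → ℝ)
    (hg : g = fun z => ∑ i, f i (x0 i + (L *ᵥ z) i))
    (H : (Fin n → ℝ) → Matrix (Fin n) (Fin n) ℝ)
    (hH : H = fun x => Matrix.diagonal fun i => deriv (deriv (f i)) (x i))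
    (gradg : (Fin n → ℝ) → (Fin n → ℝ))
    (hgradg : gradg = fun z => L *ᵥ fun i => deriv (f i) (x0 i + (L *ᵥ z) i))
    (q : ℕ)
    (A : (Fin n → ℝ) → Matrix (Fin n) (Fin n) ℝ)
    (hA : A = fun z => ∑ p ∈ Finset.range (q + 1),
      (1 - L * H (fun i => x0 i + (L *ᵥ z) i) * L) ^ p)
    (ε : ℝ) (hε0 : 0 ≤ ε) (hε1 : ε < 1)
    (hspec : ∀ x v : Fin n → ℝ, (∑ i, v i) = 0 →
      |v ⬝ᵥ ((1 - L * H x * L) *ᵥ v)| ≤ ε * (v ⬝ᵥ v))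
    (α : ℝ)
    (hα : α = (1 - ε) / ((n - 1 : ℝ) * (1 + ε) * (1 - ε ^ (q + 1))))
    (z0 : Fin n → ℝ) (z : ℕ → Fin n → ℝ)
    (hz0 : z 0 = z0)
    (hiter : ∀ k, z (k + 1) = z k - α • (A (z k) *ᵥ gradg (z k)))
    (zstar : Fin n → ℝ)
    (hzstar_min : ∀ w, g zstar ≤ g w)
    (hzstar_sum : ∑ i, zstar i = ∑ i, z0 i) :
    ∀ k, g (z (k + 1)) - g (z k) ≤
      -(((1 - ε) ^ 4 * (1 + ε * (-ε) ^ q) ^ 2) /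
          (2 * ((n : ℝ) - 1) ^ 2 * (1 + ε) ^ 3 * (1 - ε ^ (2 * (q + 1))))) *
        (∑ i, (z k i - zstar i) ^ 2) :=
  dana_d_linear_convergence_general n hn L hLsymm hL1 f hf x0 g hg H hH gradg hgradg q A hA ε hε0
    hε1 hspec α hα z0 z hz0 hiter zstar hzstar_min hzstar_sum
end

section
/- The set (0,1)^n × Y, with Y = {y ∈ ℝ^n : 1_n^⊤ y = κ}, is forward invariant under the BinPAD dynamics: every solution (x,y) : [0,T̄) → ℝ^n × ℝ^n of ẋ = (|H̃(x)|_m)^{-1} diag((x_i − x_i²)/T)(W̃x + (T/τ)(log(1/x_i − 1))_i + ṽ(y)), ẏ = −αγ L((p_i x_i)_i + Ly), with x(0) ∈ (0,1)^n and 1_n^⊤ y(0) = κ, satisfies x(t) ∈ (0,1)^n and 1_n^⊤ y(t) = κ for all t ∈ [0,T̄); moreover, along such a solution y(t) remains bounded. -/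
/-!
Each coordinate of `x` obeys `ẋᵢ = cᵢ(t) (Fᵢ(t) + (T/τ) log (1/xᵢ - 1))` with `cᵢ > 0` while
`xᵢ ∈ (0,1)` and `Fᵢ` continuous, hence bounded on compact time intervals; the logarithm is
`+∞` at `0` and `-∞` at `1`, so `xᵢ` can reach neither level. Since `1ᵀL = 0`, the sum `1ᵀy` is
conserved, and on the hyperplane `1ᵀy = κ` the spectral gap of `L` makes `|y - (κ/n)1|²` a
Lyapunov function whose derivative is negative once it is large, the input `p ⊙ x` being
bounded by `|p|`.
-/

open Matrix Set Real

section Fencing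

variable {E : Type*} [NormedAddCommGroup E] [NormedSpace ℝ E] {a b c : ℝ}

theorem HasDerivWithinAt.Ici_of_Ico {f : ℝ → E} {f' : E} {t : ℝ}
    (h : HasDerivWithinAt f f' (Ico a b) t) (ht : t ∈ Ico a b) :
    HasDerivWithinAt f f' (Ici t) t :=
  h.mono_of_mem_nhdsWithin <|
    Filter.mem_of_superset (Ico_mem_nhdsGE ht.2) (Ico_subset_Ico_left ht.1)

theorem continuousOn_Icc_of_hasDerivWithinAt_Ico {f f' : ℝ → E}
    (hf : ∀ t ∈ Ico a b, HasDerivWithinAt f (f' t) (Ico a b) t) (hcb : c < b) :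
    ContinuousOn f (Icc a c) := fun t ht =>
  ((hf t ⟨ht.1, ht.2.trans_lt hcb⟩).continuousWithinAt).mono (Icc_subset_Ico_right hcb)

theorem le_of_deriv_right_neg_of_eq {f f' : ℝ → ℝ} {B : ℝ}
    (hf : ∀ t ∈ Ico a b, HasDerivWithinAt f (f' t) (Ico a b) t) (ha : f a ≤ B)
    (hB : ∀ t ∈ Ico a c, f t = B → f' t < 0) (hac : a ≤ c) (hcb : c < b) : f c ≤ B :=
  image_le_of_deriv_right_lt_deriv_boundary' (B := fun _ => B) (B' := fun _ => 0)
    (continuousOn_Icc_of_hasDerivWithinAt_Ico hf hcb)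
    (fun t ht => (hf t ⟨ht.1, ht.2.trans hcb⟩).Ici_of_Ico ⟨ht.1, ht.2.trans hcb⟩)
    ha continuousOn_const (fun _ _ => hasDerivWithinAt_const _ _ _) hB ⟨hac, le_rfl⟩

theorem eq_of_hasDerivWithinAt_Ico_zero {f : ℝ → E}
    (hf : ∀ t ∈ Ico a b, HasDerivWithinAt f 0 (Ico a b) t) : ∀ t ∈ Ico a b, f t = f a :=
  fun t ht => constant_of_has_deriv_right_zero (continuousOn_Icc_of_hasDerivWithinAt_Ico hf ht.2)
    (fun s hs => (hf s ⟨hs.1, hs.2.trans ht.2⟩).Ici_of_Ico ⟨hs.1, hs.2.trans ht.2⟩) t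
    ⟨ht.1, le_rfl⟩

end Fencing

section Logit

theorem lt_log_one_div_sub_one {u c : ℝ} (hu : 0 < u) (huc : u < (1 + exp c)⁻¹) :
    c < log (1 / u - 1) := by
  have h : 1 + exp c < 1 / u := by
    rw [one_div]; exact (lt_inv_comm₀ hu (by positivity)).1 huc
  rw [lt_log_iff_exp_lt (by linarith [exp_pos c])]
  linarith

theorem log_one_div_one_sub_sub_one {u : ℝ} (h0 : 0 < u) (h1 : u < 1) :
    log (1 / (1 - u) - 1) = -log (1 / u - 1) := by
  rw [← log_inv]
  congr 1
  have : 1 - u ≠ 0 := by linarith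
  field_simp
  ring

theorem mem_Ioo_of_logit_barrier {u c F : ℝ → ℝ} {a b k : ℝ} (hk : 0 < k)
    (hu : ∀ t ∈ Ico a b, HasDerivWithinAt u (c t * (F t + k * log (1 / u t - 1))) (Ico a b) t)
    (hc : ∀ t ∈ Ico a b, u t ∈ Ioo 0 1 → 0 < c t) (hF : ContinuousOn F (Ico a b))
    (ha : u a ∈ Ioo 0 1) : ∀ t ∈ Ico a b, u t ∈ Ioo 0 1 := by
  intro t₁ ht₁
  obtain ⟨M, hM⟩ :=
    isCompact_Icc.exists_bound_of_continuousOn (hF.mono (Icc_subset_Ico_right ht₁.2))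
  have hFM : ∀ t ∈ Ico a t₁, |F t| ≤ M := fun t ht => hM t ⟨ht.1, ht.2.le⟩
  set ε := (1 + exp (M / k))⁻¹
  have hε : ε < 1 := inv_lt_one_of_one_lt₀ (by linarith [exp_pos (M / k)])
  obtain ⟨δ, hδ0, hδ⟩ :=
    exists_between (lt_min (lt_min ha.1 (sub_pos.2 ha.2)) (by positivity : (0 : ℝ) < ε))
  rw [lt_min_iff, lt_min_iff] at hδ
  obtain ⟨⟨hδa, hδa'⟩, hδε⟩ := hδ
  have hlog : M < k * log (1 / δ - 1) :=
    (div_lt_iff₀' hk).1 (lt_log_one_div_sub_one hδ0 hδε)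
  have hδ1 : δ < 1 := hδε.trans hε
  have hlow : δ ≤ u t₁ := by
    refine neg_le_neg_iff.1 (le_of_deriv_right_neg_of_eq (f := -u) (fun t ht => (hu t ht).neg)
      (neg_le_neg hδa.le) (fun t ht hut => ?_) ht₁.1 ht₁.2)
    rw [Pi.neg_apply, neg_inj] at hut
    have hF := neg_le_of_abs_le (hFM t ht)
    have hct := hc t ⟨ht.1, ht.2.trans ht₁.2⟩ (hut ▸ ⟨hδ0, hδ1⟩)
    rw [hut, neg_lt_zero]
    exact mul_pos hct (by linarith)
  have hhigh : u t₁ ≤ 1 - δ := by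
    refine le_of_deriv_right_neg_of_eq hu (by linarith) (fun t ht hut => ?_) ht₁.1 ht₁.2
    have hF := le_of_abs_le (hFM t ht)
    have hct := hc t ⟨ht.1, ht.2.trans ht₁.2⟩ (hut ▸ ⟨by linarith, by linarith⟩)
    rw [hut, log_one_div_one_sub_sub_one hδ0 hδ1]
    exact mul_neg_of_pos_of_neg hct (by linarith)
  exact ⟨hδ0.trans_le hlow, hhigh.trans_lt (by linarith)⟩

end Logit

section SpectralGap

variable {ι : Type*} [Fintype ι]

theorem dotProduct_self_le_card_mul_norm_sq (w : ι → ℝ) :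
    w ⬝ᵥ w ≤ Fintype.card ι * ‖w‖ ^ 2 :=
  calc w ⬝ᵥ w = ∑ i, ‖w i‖ ^ 2 := by simp [dotProduct, sq]
    _ ≤ ∑ _i : ι, ‖w‖ ^ 2 :=
      Finset.sum_le_sum fun i _ => pow_le_pow_left₀ (norm_nonneg _) (norm_le_pi_norm w i) 2
    _ = Fintype.card ι * ‖w‖ ^ 2 := by simp

theorem sq_le_dotProduct_self (w : ι → ℝ) (i : ι) : w i ^ 2 ≤ w ⬝ᵥ w := by
  simpa [dotProduct, sq] using Finset.single_le_sum (f := fun j => w j * w j)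
    (fun j _ => mul_self_nonneg (w j)) (Finset.mem_univ i)

theorem norm_sq_le_dotProduct_self (w : ι → ℝ) : ‖w‖ ^ 2 ≤ w ⬝ᵥ w := by
  have hnorm : ‖w‖ ≤ √(w ⬝ᵥ w) :=
    (pi_norm_le_iff_of_nonneg (sqrt_nonneg _)).2 fun i => abs_le_sqrt (sq_le_dotProduct_self w i)
  exact (le_sqrt (norm_nonneg _) (Finset.sum_nonneg fun i _ => mul_self_nonneg (w i))).1 hnorm

theorem Matrix.exists_pos_mul_dotProduct_self_le (L : Matrix ι ι ℝ) (K : Submodule ℝ (ι → ℝ))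
    (hK : ∀ v ∈ K, L *ᵥ v = 0 → v = 0) :
    ∃ c > 0, ∀ w ∈ K, c * (w ⬝ᵥ w) ≤ (L *ᵥ w) ⬝ᵥ (L *ᵥ w) := by
  have hinj : Function.Injective (L.mulVecLin ∘ₗ K.subtype) := by
    rw [← LinearMap.ker_eq_bot, LinearMap.ker_eq_bot']
    exact fun v hv => Subtype.ext (hK v v.2 hv)
  obtain ⟨C, -, hC⟩ := (LinearMap.injective_iff_antilipschitz _).1 hinj
  obtain ⟨c, hc, hcL⟩ := antilipschitzWith_iff_exists_mul_le_norm.1 ⟨C, hC⟩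
  -- `‖·‖` is the sup norm on `ι → ℝ`; it controls `w ⬝ᵥ w` only up to the factor `card ι`.
  refine ⟨c ^ 2 / (Fintype.card ι + 1), by positivity, fun w hw => ?_⟩
  have hw : c * ‖w‖ ≤ ‖L *ᵥ w‖ := hcL ⟨w, hw⟩
  calc c ^ 2 / (Fintype.card ι + 1) * (w ⬝ᵥ w)
      ≤ c ^ 2 / (Fintype.card ι + 1) * (Fintype.card ι * ‖w‖ ^ 2) := by
        gcongr; exact dotProduct_self_le_card_mul_norm_sq w
    _ ≤ (c * ‖w‖) ^ 2 := by
        rw [mul_pow, div_mul_eq_mul_div, div_le_iff₀ (by positivity)]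
        nlinarith [sq_nonneg c, sq_nonneg ‖w‖, mul_nonneg (sq_nonneg c) (sq_nonneg ‖w‖)]
    _ ≤ ‖L *ᵥ w‖ ^ 2 := pow_le_pow_left₀ (by positivity) hw 2
    _ ≤ (L *ᵥ w) ⬝ᵥ (L *ᵥ w) := norm_sq_le_dotProduct_self _

theorem Matrix.exists_pos_mul_dotProduct_self_le_of_ker_eq_const {L : Matrix ι ι ℝ}
    (hL : ∀ v, L *ᵥ v = 0 → ∃ c : ℝ, v = fun _ => c) :
    ∃ c > 0, ∀ w : ι → ℝ, ∑ i, w i = 0 → c * (w ⬝ᵥ w) ≤ (L *ᵥ w) ⬝ᵥ (L *ᵥ w) := by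
  have hK : ∀ w : ι → ℝ,
      w ∈ LinearMap.ker (∑ i, LinearMap.proj (R := ℝ) (φ := fun _ : ι => ℝ) i) ↔ ∑ i, w i = 0 := by
    simp
  obtain ⟨c, hc, hgap⟩ := L.exists_pos_mul_dotProduct_self_le _ fun v hv hLv => by
    obtain ⟨d, rfl⟩ := hL v hLv
    funext i
    have hcard : 0 < Fintype.card ι := Fintype.card_pos_iff.2 ⟨i⟩
    have hsum : (Fintype.card ι : ℝ) * d = 0 := by simpa using (hK _).1 hv
    simpa [hcard.ne'] using hsum
  exact ⟨c, hc, fun w hw => hgap w ((hK w).2 hw)⟩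

end SpectralGap

section Consensus

variable {ι : Type*} [Fintype ι] {L : Matrix ι ι ℝ} {a b : ℝ}

theorem Matrix.sum_mulVec_eq_zero (hL : L.IsSymm) (hL1 : L *ᵥ (fun _ => 1) = 0) (v : ι → ℝ) :
    ∑ i, (L *ᵥ v) i = 0 := by
  rw [← one_dotProduct, dotProduct_mulVec, ← mulVec_transpose, hL.eq]
  exact (congrArg (· ⬝ᵥ v) hL1).trans (zero_dotProduct v)

theorem HasDerivWithinAt.dotProduct_self {w : ℝ → ι → ℝ} {w' : ι → ℝ} {s : Set ℝ} {t : ℝ}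
    (h : HasDerivWithinAt w w' s t) :
    HasDerivWithinAt (fun t => w t ⬝ᵥ w t) (2 * (w t ⬝ᵥ w')) s t := by
  refine (HasDerivWithinAt.fun_sum (u := Finset.univ) fun i _ =>
    (hasDerivWithinAt_pi.1 h i).fun_mul (hasDerivWithinAt_pi.1 h i)).congr_deriv ?_
  simp only [dotProduct, Finset.mul_sum]
  exact Finset.sum_congr rfl fun i _ => by ring

theorem half_sub_le_dotProduct_add (z r : ι → ℝ) : (z ⬝ᵥ z - r ⬝ᵥ r) / 2 ≤ z ⬝ᵥ (r + z) := by
  have hsq : 0 ≤ ∑ i, (z i + r i) ^ 2 := Finset.sum_nonneg fun i _ => sq_nonneg _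
  have hexp : ∑ i, (z i + r i) ^ 2 = 2 * (z ⬝ᵥ (r + z)) - (z ⬝ᵥ z - r ⬝ᵥ r) := by
    simp only [dotProduct, Pi.add_apply, Finset.mul_sum, ← Finset.sum_sub_distrib]
    exact Finset.sum_congr rfl fun i _ => by ring
  linarith

theorem sum_eq_of_hasDerivWithinAt_Ico {y y' : ℝ → ι → ℝ}
    (hy : ∀ t ∈ Ico a b, HasDerivWithinAt y (y' t) (Ico a b) t)
    (hy' : ∀ t ∈ Ico a b, ∑ i, y' t i = 0) : ∀ t ∈ Ico a b, ∑ i, y t i = ∑ i, y a i :=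
  eq_of_hasDerivWithinAt_Ico_zero fun t ht => by
    simpa only [hy' t ht] using
      HasDerivWithinAt.fun_sum (u := Finset.univ) fun i _ => hasDerivWithinAt_pi.1 (hy t ht) i

theorem exists_abs_le_of_hasDerivWithinAt_laplacian (hLsymm : L.IsSymm)
    (hL1 : L *ᵥ (fun _ => 1) = 0) (hLker : ∀ v, L *ᵥ v = 0 → ∃ c : ℝ, v = fun _ => c)
    {β ρ : ℝ} (hβ : 0 < β) {y r : ℝ → ι → ℝ}
    (hy : ∀ t ∈ Ico a b,
      HasDerivWithinAt y (-β • (L *ᵥ fun i => r t i + (L *ᵥ y t) i)) (Ico a b) t)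
    (hr : ∀ t ∈ Ico a b, r t ⬝ᵥ r t ≤ ρ) : ∃ C, ∀ t ∈ Ico a b, ∀ i, |y t i| ≤ C := by
  obtain ⟨c, hc, hgap⟩ := exists_pos_mul_dotProduct_self_le_of_ker_eq_const hLker
  have hmean := sum_eq_of_hasDerivWithinAt_Ico hy fun t _ => by
    simp [← Finset.mul_sum, sum_mulVec_eq_zero hLsymm hL1]
  set μ := (∑ i, y a i) / Fintype.card ι
  set w : ℝ → ι → ℝ := fun t i => y t i - μ
  have hw_sum : ∀ t ∈ Ico a b, ∑ i, w t i = 0 := fun t ht => by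
    rcases isEmpty_or_nonempty ι with hι | hι
    · simp
    · simp only [w, μ, Finset.sum_sub_distrib, hmean t ht, Finset.sum_const, Finset.card_univ,
        nsmul_eq_mul]
      rw [mul_div_cancel₀ _ (Nat.cast_ne_zero.2 Fintype.card_ne_zero), sub_self]
  have hLw : ∀ t, L *ᵥ y t = L *ᵥ w t := fun t => by
    have : y t = w t + μ • fun _ => 1 := by funext i; simp [w]
    rw [this, mulVec_add, mulVec_smul, hL1, smul_zero, add_zero]
  have hV : ∀ t ∈ Ico a b, HasDerivWithinAt (fun t => w t ⬝ᵥ w t)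
      (-(2 * β) * ((L *ᵥ w t) ⬝ᵥ (r t + L *ᵥ w t))) (Ico a b) t := fun t ht => by
    have hw : HasDerivWithinAt w (-β • (L *ᵥ fun i => r t i + (L *ᵥ y t) i)) (Ico a b) t :=
      (hy t ht).sub_const fun _ => μ
    convert hw.dotProduct_self using 1
    rw [dotProduct_smul, dotProduct_mulVec, ← mulVec_transpose, hLsymm.eq, hLw]
    simp only [← Pi.add_def, dotProduct_add, smul_eq_mul, neg_mul, mul_neg, neg_inj]
    ring
  set B := max (w a ⬝ᵥ w a) (ρ / c) + 1
  have hVB : ∀ t ∈ Ico a b, w t ⬝ᵥ w t ≤ B := fun t ht =>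
    le_of_deriv_right_neg_of_eq hV (by linarith [le_max_left (w a ⬝ᵥ w a) (ρ / c)])
      (fun s hs hsB => by
        have hsI : s ∈ Ico a b := ⟨hs.1, hs.2.trans ht.2⟩
        have hρ : ρ < c * B := by
          rw [← div_lt_iff₀' hc]
          linarith [le_max_right (w a ⬝ᵥ w a) (ρ / c)]
        have hLwB : c * B ≤ (L *ᵥ w s) ⬝ᵥ (L *ᵥ w s) := hsB ▸ hgap _ (hw_sum s hsI)
        have hhalf := half_sub_le_dotProduct_add (L *ᵥ w s) (r s)
        have hrs := hr s hsI
        nlinarith)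
      ht.1 ht.2
  refine ⟨√B + |μ|, fun t ht i => ?_⟩
  have hwi : |w t i| ≤ √B := abs_le_sqrt ((sq_le_dotProduct_self (w t) i).trans (hVB t ht))
  calc |y t i| = |w t i + μ| := by simp [w]
    _ ≤ |w t i| + |μ| := abs_add_le _ _
    _ ≤ √B + |μ| := by linarith

end Consensus

theorem binpad_forward_invariance_general
    (n : ℕ)
    (L : Matrix (Fin n) (Fin n) ℝ)
    (hLsymm : L.IsSymm)
    (hL1 : L *ᵥ (fun _ => (1 : ℝ)) = 0)
    (hLker : ∀ v : Fin n → ℝ, L *ᵥ v = 0 → ∃ c : ℝ, v = fun _ => c)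
    (a b p : Fin n → ℝ)
    (γ T τ m α : ℝ) (hγ : 0 < γ) (hT : 0 < T) (hτ : 0 < τ) (hm : 0 < m) (hα : 0 < α)
    (Pr κ : ℝ)
    (Wtil : Matrix (Fin n) (Fin n) ℝ)
    (vtil : (Fin n → ℝ) → (Fin n → ℝ))
    (hvtil : vtil = fun y i => a i * b i + γ * p i * (Pr / n - (L *ᵥ y) i))
    (hent : (Fin n → ℝ) → Fin n → ℝ)
    (ptdInv : (Fin n → ℝ) → Fin n → ℝ)
    (hptdInv : ptdInv = fun x i => if m ≤ |hent x i| then |hent x i|⁻¹ else m⁻¹)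
    (vfx : (Fin n → ℝ) → (Fin n → ℝ) → (Fin n → ℝ))
    (hvfx : vfx = fun x y i => ptdInv x i * ((x i - x i ^ 2) / T) *
      ((Wtil *ᵥ x) i + (T / τ) * Real.log (1 / x i - 1) + vtil y i))
    (vfy : (Fin n → ℝ) → (Fin n → ℝ) → (Fin n → ℝ))
    (hvfy : vfy = fun x y => -(α * γ) • (L *ᵥ fun i => p i * x i + (L *ᵥ y) i))
    -- a solution on [0, T̄)
    (Tbar : ℝ) (x y : ℝ → Fin n → ℝ)
    (hsolx : ∀ t ∈ Set.Ico (0 : ℝ) Tbar,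
      HasDerivWithinAt x (vfx (x t) (y t)) (Set.Ico (0 : ℝ) Tbar) t)
    (hsoly : ∀ t ∈ Set.Ico (0 : ℝ) Tbar,
      HasDerivWithinAt y (vfy (x t) (y t)) (Set.Ico (0 : ℝ) Tbar) t)
    (hx0 : ∀ i, x 0 i ∈ Set.Ioo (0 : ℝ) 1)
    (hy0 : ∑ i, y 0 i = κ) :
    (∀ t ∈ Set.Ico (0 : ℝ) Tbar, ∀ i, x t i ∈ Set.Ioo (0 : ℝ) 1) ∧
    (∀ t ∈ Set.Ico (0 : ℝ) Tbar, ∑ i, y t i = κ) ∧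
    (∃ C : ℝ, ∀ t ∈ Set.Ico (0 : ℝ) Tbar, ∀ i, |y t i| ≤ C) := by
  subst hvfx hvfy hvtil
  have hptd : ∀ z i, 0 < ptdInv z i := fun z i => by
    rw [hptdInv]
    dsimp only
    split_ifs with h
    exacts [inv_pos.2 (hm.trans_le h), inv_pos.2 hm]
  have hxc : ContinuousOn x (Ico 0 Tbar) := fun t ht => (hsolx t ht).continuousWithinAt
  have hyc : ContinuousOn y (Ico 0 Tbar) := fun t ht => (hsoly t ht).continuousWithinAt
  have hx : ∀ t ∈ Ico 0 Tbar, ∀ i, x t i ∈ Ioo 0 1 := fun t ht i =>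
    mem_Ioo_of_logit_barrier (div_pos hT hτ)
      (c := fun s => ptdInv (x s) i * ((x s i - x s i ^ 2) / T))
      (F := fun s => (Wtil *ᵥ x s) i + (a i * b i + γ * p i * (Pr / n - (L *ᵥ y s) i)))
      (fun s hs => (hasDerivWithinAt_pi.1 (hsolx s hs) i).congr_deriv (by ring))
      (fun s _ hs => mul_pos (hptd _ _) (div_pos (by nlinarith [hs.1, hs.2]) hT))
      (by fun_prop) (hx0 i) t ht
  have hsum : ∀ t ∈ Ico 0 Tbar, ∑ i, y t i = ∑ i, y 0 i :=
    sum_eq_of_hasDerivWithinAt_Ico hsoly fun s _ => by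
      simp [← Finset.mul_sum, sum_mulVec_eq_zero hLsymm hL1]
  refine ⟨hx, fun t ht => (hsum t ht).trans hy0, ?_⟩
  refine exists_abs_le_of_hasDerivWithinAt_laplacian hLsymm hL1 hLker (mul_pos hα hγ)
    (ρ := p ⬝ᵥ p) (r := fun t i => p i * x t i) hsoly fun t ht => ?_
  exact Finset.sum_le_sum fun i _ => by
    obtain ⟨hxi0, hxi1⟩ := hx t ht i
    have hxi : x t i * x t i ≤ 1 := by nlinarith
    show p i * x t i * (p i * x t i) ≤ p i * p i
    nlinarith [mul_self_nonneg (p i)]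

/-- **Forward invariance of `(0,1)ⁿ × Y` under the BinPAD dynamics**
(Lemma: Forward Invariance of the Open Hypercube (Distributed)). Every solution of
the BinPAD dynamics with `x(0) ∈ (0,1)ⁿ` and `1ᵀy(0) = κ` satisfies
`x(t) ∈ (0,1)ⁿ` and `1ᵀy(t) = κ` on its interval of existence; moreover `y` remains
bounded. -/
theorem binpad_forward_invariance
    (n : ℕ) (hn : 2 ≤ n)
    (L : Matrix (Fin n) (Fin n) ℝ)
    (hLsymm : L.IsSymm) (hLpsd : L.PosSemidef)
    (hL1 : L *ᵥ (fun _ => (1 : ℝ)) = 0)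
    (hLker : ∀ v : Fin n → ℝ, L *ᵥ v = 0 → ∃ c : ℝ, v = fun _ => c)
    (a b p : Fin n → ℝ)
    (γ T τ m α : ℝ) (hγ : 0 < γ) (hT : 0 < T) (hτ : 0 < τ) (hm : 0 < m) (hα : 0 < α)
    (Pr κ : ℝ)
    (Wtil : Matrix (Fin n) (Fin n) ℝ)
    (hWtil : Wtil = -(Matrix.diagonal fun i => a i + γ * p i ^ 2))
    (vtil : (Fin n → ℝ) → (Fin n → ℝ))
    (hvtil : vtil = fun y i => a i * b i + γ * p i * (Pr / n - (L *ᵥ y) i))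
    (hent : (Fin n → ℝ) → Fin n → ℝ)
    (hhent : hent = fun x i => a i + γ * p i ^ 2 + (T / τ) * (1 / (x i - x i ^ 2)))
    (ptdInv : (Fin n → ℝ) → Fin n → ℝ)
    (hptdInv : ptdInv = fun x i => if m ≤ |hent x i| then |hent x i|⁻¹ else m⁻¹)
    (vfx : (Fin n → ℝ) → (Fin n → ℝ) → (Fin n → ℝ))
    (hvfx : vfx = fun x y i => ptdInv x i * ((x i - x i ^ 2) / T) *
      ((Wtil *ᵥ x) i + (T / τ) * Real.log (1 / x i - 1) + vtil y i))
    (vfy : (Fin n → ℝ) → (Fin n → ℝ) → (Fin n → ℝ))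
    (hvfy : vfy = fun x y => -(α * γ) • (L *ᵥ fun i => p i * x i + (L *ᵥ y) i))
    -- a solution on [0, T̄)
    (Tbar : ℝ) (x y : ℝ → Fin n → ℝ)
    (hsolx : ∀ t ∈ Set.Ico (0 : ℝ) Tbar,
      HasDerivWithinAt x (vfx (x t) (y t)) (Set.Ico (0 : ℝ) Tbar) t)
    (hsoly : ∀ t ∈ Set.Ico (0 : ℝ) Tbar,
      HasDerivWithinAt y (vfy (x t) (y t)) (Set.Ico (0 : ℝ) Tbar) t)
    (hx0 : ∀ i, x 0 i ∈ Set.Ioo (0 : ℝ) 1)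
    (hy0 : ∑ i, y 0 i = κ) :
    (∀ t ∈ Set.Ico (0 : ℝ) Tbar, ∀ i, x t i ∈ Set.Ioo (0 : ℝ) 1) ∧
    (∀ t ∈ Set.Ico (0 : ℝ) Tbar, ∑ i, y t i = κ) ∧
    (∃ C : ℝ, ∀ t ∈ Set.Ico (0 : ℝ) Tbar, ∀ i, |y t i| ≤ C) :=
  binpad_forward_invariance_general n L hLsymm hL1 hLker a b p γ T τ m α hγ hT hτ hm hα Pr κ Wtil
    vtil hvtil hent ptdInv hptdInv vfx hvfx vfy hvfy Tbar x y hsolx hsoly hx0 hy0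
end
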